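/- arXiv:2602.14946 — 2 statements merged into one kernel-verified Lean document; each statement's English description precedes it below -/
import Mathlib

section
/- Let n ≥ 2 and let λ ∈ ℝⁿ with λ ∈ Γ₂. Define μ ∈ ℝⁿ by μ_i = λ_i − (σ₂(λ)/σ₁(λ))/(n−1) for every i. Then σ₂(μ) = (n/(2(n−1)))·(σ₂(λ)/σ₁(λ))². -/
/-- The `k`-th elementary symmetric polynomial `σ_k` of `λ ∈ ℝⁿ`. -/
noncomputable def sigma (n k : ℕ) (lam : Fin n → ℝ) : ℝ :=
  ∑ s ∈ Finset.univ.powersetCard k, ∏ i ∈ s, lam i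

/-- Gårding's cone `Γ_k`: all `σ_l`, `1 ≤ l ≤ k`, are positive. -/
def InGamma (n k : ℕ) (lam : Fin n → ℝ) : Prop :=
  ∀ l : ℕ, 1 ≤ l → l ≤ k → 0 < sigma n l lam

lemma sigma_one (n : ℕ) (f : Fin n → ℝ) : sigma n 1 f = ∑ i, f i := by
  simp [sigma, Finset.powersetCard_one, Finset.sum_map]

lemma pair_min' {α : Type*} [LinearOrder α] [DecidableEq α] (a b : α) (H : ({a, b} : Finset α).Nonempty) :
    ({a, b} : Finset α).min' H = min a b := by
  apply le_antisymm
  · exact le_min (Finset.min'_le _ _ (by simp)) (Finset.min'_le _ _ (by simp))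
  · apply Finset.le_min'
    intro y hy
    simp only [Finset.mem_insert, Finset.mem_singleton] at hy
    rcases hy with rfl | rfl
    · exact min_le_left _ _
    · exact min_le_right _ _

lemma pair_max' {α : Type*} [LinearOrder α] [DecidableEq α] (a b : α) (H : ({a, b} : Finset α).Nonempty) :
    ({a, b} : Finset α).max' H = max a b := by
  apply le_antisymm
  · apply Finset.max'_le
    intro y hy
    simp only [Finset.mem_insert, Finset.mem_singleton] at hy
    rcases hy with rfl | rfl
    · exact le_max_left _ _
    · exact le_max_right _ _
  · exact max_le (Finset.le_max' _ _ (by simp)) (Finset.le_max' _ _ (by simp))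

lemma sigma_two_eq_pairs (n : ℕ) (f : Fin n → ℝ) :
    sigma n 2 f = ∑ p ∈ Finset.univ.filter (fun p : Fin n × Fin n => p.1 < p.2),
      f p.1 * f p.2 := by
  classical
  rw [sigma]
  refine Finset.sum_bij'
    (fun s hs => (s.min' ?_, s.max' ?_))
    (fun p _ => ({p.1, p.2} : Finset (Fin n))) ?_ ?_ ?_ ?_ ?_
  · have := (Finset.mem_powersetCard.mp hs).2
    exact Finset.card_pos.mp (by omega)
  · have := (Finset.mem_powersetCard.mp hs).2
    exact Finset.card_pos.mp (by omega)
  · intro s hs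
    have hc := (Finset.mem_powersetCard.mp hs).2
    simp only [Finset.mem_filter, Finset.mem_univ, true_and]
    exact Finset.min'_lt_max'_of_card _ (by omega)
  · intro p hp
    have hlt : p.1 < p.2 := by simpa using hp
    rw [Finset.mem_powersetCard]
    exact ⟨Finset.subset_univ _, Finset.card_pair hlt.ne⟩
  · intro s hs
    obtain ⟨a, b, hab, rfl⟩ := Finset.card_eq_two.mp (Finset.mem_powersetCard.mp hs).2
    simp only [pair_min', pair_max']
    rcases hab.lt_or_gt with h | h
    · rw [min_eq_left h.le, max_eq_right h.le]
    · rw [min_eq_right h.le, max_eq_left h.le, Finset.pair_comm]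
  · intro p hp
    have hlt : p.1 < p.2 := by simpa using hp
    simp only [pair_min', pair_max']
    rw [min_eq_left hlt.le, max_eq_right hlt.le]
  · intro s hs
    obtain ⟨a, b, hab, rfl⟩ := Finset.card_eq_two.mp (Finset.mem_powersetCard.mp hs).2
    simp only [pair_min', pair_max', Finset.prod_pair hab]
    rcases hab.lt_or_gt with h | h
    · rw [min_eq_left h.le, max_eq_right h.le]
    · rw [min_eq_right h.le, max_eq_left h.le, mul_comm]

lemma two_sigma_two (n : ℕ) (f : Fin n → ℝ) :
    2 * sigma n 2 f = (∑ i, f i) ^ 2 - ∑ i, f i ^ 2 := by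
  classical
  rw [sigma_two_eq_pairs]
  have hsq : (∑ i, f i) ^ 2 = ∑ p ∈ Finset.univ ×ˢ Finset.univ, f p.1 * f p.2 := by
    rw [sq, Finset.sum_mul_sum, ← Finset.sum_product']
  have hdiag : ∑ p ∈ (Finset.univ ×ˢ Finset.univ).filter
      (fun p : Fin n × Fin n => p.1 = p.2), f p.1 * f p.2 = ∑ i, f i ^ 2 := by
    refine Finset.sum_nbij' (fun p => p.1) (fun i => (i, i)) ?_ ?_ ?_ ?_ ?_
    · intro p _; exact Finset.mem_univ _
    · intro i _; simp
    · intro p hp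
      have h : p.1 = p.2 := by simpa using hp
      simp [Prod.ext_iff, h]
    · intro i _; rfl
    · intro p hp
      have h : p.1 = p.2 := by simpa using hp
      rw [← h, sq]
  have hswap : ∑ p ∈ (Finset.univ ×ˢ Finset.univ).filter
      (fun p : Fin n × Fin n => p.2 < p.1), f p.1 * f p.2
      = ∑ p ∈ (Finset.univ ×ˢ Finset.univ).filter
      (fun p : Fin n × Fin n => p.1 < p.2), f p.1 * f p.2 := by
    refine Finset.sum_nbij' (fun p => p.swap) (fun p => p.swap) ?_ ?_ ?_ ?_ ?_
    · intro p hp; simpa using by simpa using hp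
    · intro p hp; simpa using by simpa using hp
    · intro p _; rfl
    · intro p _; rfl
    · intro p _; exact mul_comm _ _
  have hsplit := Finset.sum_filter_add_sum_filter_not (Finset.univ ×ˢ Finset.univ)
    (fun p : Fin n × Fin n => p.1 < p.2) (fun p => f p.1 * f p.2)
  have hsplit2 := Finset.sum_filter_add_sum_filter_not
    ((Finset.univ ×ˢ Finset.univ).filter (fun p : Fin n × Fin n => ¬ p.1 < p.2))
    (fun p : Fin n × Fin n => p.1 = p.2) (fun p => f p.1 * f p.2)
  have hf1 : ((Finset.univ ×ˢ Finset.univ).filter (fun p : Fin n × Fin n => ¬ p.1 < p.2)).filter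
      (fun p : Fin n × Fin n => p.1 = p.2)
      = (Finset.univ ×ˢ Finset.univ).filter (fun p : Fin n × Fin n => p.1 = p.2) := by
    rw [Finset.filter_filter]
    apply Finset.filter_congr
    intro p _
    constructor
    · exact fun h => h.2
    · intro h; exact ⟨h ▸ lt_irrefl _, h⟩
  have hf2 : ((Finset.univ ×ˢ Finset.univ).filter (fun p : Fin n × Fin n => ¬ p.1 < p.2)).filter
      (fun p : Fin n × Fin n => ¬ p.1 = p.2)
      = (Finset.univ ×ˢ Finset.univ).filter (fun p : Fin n × Fin n => p.2 < p.1) := by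
    rw [Finset.filter_filter]
    apply Finset.filter_congr
    intro p _
    constructor
    · rintro ⟨h1, h2⟩
      rcases lt_trichotomy p.1 p.2 with h | h | h
      · exact absurd h h1
      · exact absurd h h2
      · exact h
    · intro h; exact ⟨fun h' => (lt_asymm h') h, ne_of_gt h⟩
  rw [hf1, hf2] at hsplit2
  rw [hswap, hdiag] at hsplit2
  have : ∑ p ∈ Finset.filter (fun p : Fin n × Fin n => p.1 < p.2) Finset.univ, f p.1 * f p.2
      = ∑ p ∈ (Finset.univ ×ˢ Finset.univ).filter (fun p : Fin n × Fin n => p.1 < p.2),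
        f p.1 * f p.2 := by
    rw [Finset.univ_product_univ]
  rw [this]
  rw [hsq]
  linarith [hsplit, hsplit2]

theorem stmt_3 (n : ℕ) (hn : 2 ≤ n) (lam : Fin n → ℝ) (hlam : InGamma n 2 lam)
    (mu : Fin n → ℝ)
    (hmu : ∀ i, mu i = lam i - (sigma n 2 lam / sigma n 1 lam) / ((n : ℝ) - 1)) :
    sigma n 2 mu = ((n : ℝ) / (2 * ((n : ℝ) - 1))) * (sigma n 2 lam / sigma n 1 lam) ^ 2 := by
  have hS : 0 < sigma n 1 lam := hlam 1 le_rfl (by norm_num)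
  have hSne : sigma n 1 lam ≠ 0 := ne_of_gt hS
  have hn2 : (2 : ℝ) ≤ (n : ℝ) := by exact_mod_cast hn
  have hn1 : (n : ℝ) - 1 ≠ 0 := by linarith
  set t := (sigma n 2 lam / sigma n 1 lam) / ((n : ℝ) - 1) with ht
  have hs1 : sigma n 1 lam = ∑ i, lam i := sigma_one n lam
  have e1 : ∑ i, mu i = (∑ i, lam i) - n * t := by
    simp [hmu, Finset.sum_sub_distrib, Finset.card_univ, mul_comm]
  have e2 : ∑ i, mu i ^ 2 = (∑ i, lam i ^ 2) - 2 * t * (∑ i, lam i) + n * t ^ 2 := by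
    have h : ∀ i, mu i ^ 2 = lam i ^ 2 - 2 * t * lam i + t ^ 2 := fun i => by rw [hmu i]; ring
    rw [Finset.sum_congr rfl (fun i _ => h i)]
    rw [Finset.sum_add_distrib, Finset.sum_sub_distrib, ← Finset.mul_sum,
      Finset.sum_const, Finset.card_univ]
    simp [mul_comm]
  have h1 := two_sigma_two n lam
  have h2 := two_sigma_two n mu
  rw [e1, e2] at h2
  have key : ((n : ℝ) - 1) * (t * (∑ i, lam i)) = sigma n 2 lam := by
    rw [ht, ← hs1]
    field_simp
  have h3 : 2 * sigma n 2 mu = (n : ℝ) * ((n : ℝ) - 1) * t ^ 2 := by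
    linear_combination h2 - h1 - 2 * key
  have h4 : sigma n 2 mu = (n : ℝ) * ((n : ℝ) - 1) / 2 * t ^ 2 := by linarith
  rw [h4, ht]
  field_simp
end

section
/- Let n ≥ 2, let Ω ⊆ ℝⁿ be an open set, and let u : Ω → ℝ be a C^∞ function such that at every point of Ω the eigenvalue vector λ(D²u) of the Hessian matrix D²u lies in Γ₂ and satisfies σ₂(λ(D²u))/σ₁(λ(D²u)) = 1. Define v : Ω → ℝ by v(x) = u(x) − |x|²/(2(n−1)). Then D²v = D²u − (1/(n−1))·I at every point of Ω, the eigenvalue vector λ(D²v) lies in Γ₂ at every point, and σ₂(λ(D²v)) = n/(2(n−1)) at every point of Ω. -/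
/-- The Hessian matrix `D²u` of `u : ℝⁿ → ℝ` at `x`. -/
noncomputable def hess {n : ℕ} (u : EuclideanSpace ℝ (Fin n) → ℝ)
    (x : EuclideanSpace ℝ (Fin n)) : Matrix (Fin n) (Fin n) ℝ :=
  Matrix.of fun i j =>
    fderiv ℝ (fun y => fderiv ℝ u y (EuclideanSpace.single j 1)) x (EuclideanSpace.single i 1)

lemma sum_sq_identity {ι : Type*} [DecidableEq ι] (s : Finset ι) (f : ι → ℝ) :
    (∑ i ∈ s, f i)^2 = ∑ i ∈ s, (f i)^2 + 2 * ∑ t ∈ s.powersetCard 2, ∏ i ∈ t, f i := by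
  induction s using Finset.induction_on with
  | empty =>
    have : (∅ : Finset ι).powersetCard 2 = ∅ := by
      rw [Finset.powersetCard_eq_empty]; simp
    simp [this]
  | insert a s ha ih =>
    have hdisj : Disjoint (s.powersetCard 2) ((s.powersetCard 1).image (insert a)) := by
      rw [Finset.disjoint_right]
      intro t ht ht2
      obtain ⟨t', ht', rfl⟩ := Finset.mem_image.mp ht
      have := (Finset.mem_powersetCard.mp ht2).1
      exact ha (this (Finset.mem_insert_self a t'))
    rw [Finset.sum_insert ha, Finset.sum_insert ha, Finset.powersetCard_succ_insert ha,
      Finset.sum_union hdisj, Finset.sum_image]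
    · have h1 : ∑ t ∈ s.powersetCard 1, ∏ i ∈ insert a t, f i = f a * ∑ i ∈ s, f i := by
        rw [Finset.mul_sum, Finset.powersetCard_one, Finset.sum_map]
        refine Finset.sum_congr rfl fun i hi => ?_
        simp only [Function.Embedding.coeFn_mk]
        rw [Finset.prod_insert (by simp only [Finset.mem_singleton]; rintro rfl; exact ha hi),
          Finset.prod_singleton]
      rw [h1]; ring_nf; linarith [ih]
    · intro t ht t' ht' h
      have hat : a ∉ t := fun h' => ha ((Finset.mem_powersetCard.mp ht).1 h')
      have hat' : a ∉ t' := fun h' => ha ((Finset.mem_powersetCard.mp ht').1 h')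
      have := congrArg (fun x => Finset.erase x a) h
      simpa [Finset.erase_insert hat, Finset.erase_insert hat'] using this

lemma sigma_one_eq (n : ℕ) (lam : Fin n → ℝ) : sigma n 1 lam = ∑ i, lam i := by
  simp [sigma, Finset.powersetCard_one, Finset.sum_map]

lemma sigma_two_eq (n : ℕ) (lam : Fin n → ℝ) :
    sigma n 2 lam = ((∑ i, lam i)^2 - ∑ i, (lam i)^2) / 2 := by
  have := sum_sq_identity (Finset.univ : Finset (Fin n)) lam
  simp only [sigma]
  linarith

lemma herm_trace {m : Type*} [Fintype m] [DecidableEq m]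
    {A : Matrix m m ℝ} (hA : A.IsHermitian) :
    A.trace = ∑ i, hA.eigenvalues i := by
  nth_rewrite 1 [hA.spectral_theorem]
  rw [Unitary.conjStarAlgAut_apply]
  rw [Matrix.trace_mul_cycle]
  rw [show (star (hA.eigenvectorUnitary : Matrix m m ℝ)) * (hA.eigenvectorUnitary : Matrix m m ℝ)
      = 1 from (Matrix.mem_unitaryGroup_iff').mp hA.eigenvectorUnitary.2]
  simp [Matrix.trace_diagonal]

lemma herm_trace_sq {m : Type*} [Fintype m] [DecidableEq m]
    {A : Matrix m m ℝ} (hA : A.IsHermitian) :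
    (A * A).trace = ∑ i, hA.eigenvalues i ^ 2 := by
  set U := (hA.eigenvectorUnitary : Matrix m m ℝ) with hU
  have hsU : star U * U = 1 := (Matrix.mem_unitaryGroup_iff').mp hA.eigenvectorUnitary.2
  set D := Matrix.diagonal ((RCLike.ofReal ∘ hA.eigenvalues : m → ℝ)) with hD
  have h : A = U * D * star U := by
    have := hA.spectral_theorem; rwa [Unitary.conjStarAlgAut_apply] at this
  have key : A * A = U * (D * D) * star U := by
    rw [h]
    calc U * D * star U * (U * D * star U) = U * (D * ((star U * U) * (D * star U))) := by
          simp only [Matrix.mul_assoc]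
      _ = U * (D * D) * star U := by rw [hsU, Matrix.one_mul]; simp only [Matrix.mul_assoc]
  rw [key, Matrix.trace_mul_cycle, ← Matrix.mul_assoc, hsU, Matrix.one_mul]
  simp [hD, Matrix.diagonal_mul_diagonal, Matrix.trace_diagonal, sq]

theorem stmt_5 (n : ℕ) (hn : 2 ≤ n) (Ω : Set (EuclideanSpace ℝ (Fin n))) (hΩ : IsOpen Ω)
    (u : EuclideanSpace ℝ (Fin n) → ℝ) (hu : ContDiffOn ℝ (⊤ : ℕ∞) u Ω)
    (hsym : ∀ x ∈ Ω, (hess u x).IsHermitian)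
    (hadm : ∀ x (hx : x ∈ Ω), InGamma n 2 ((hsym x hx).eigenvalues) ∧
      sigma n 2 ((hsym x hx).eigenvalues) / sigma n 1 ((hsym x hx).eigenvalues) = 1)
    (v : EuclideanSpace ℝ (Fin n) → ℝ)
    (hv : ∀ x, v x = u x - ‖x‖ ^ 2 / (2 * ((n : ℝ) - 1))) :
    ∀ x ∈ Ω,
      hess v x = hess u x - ((1 : ℝ) / ((n : ℝ) - 1)) • (1 : Matrix (Fin n) (Fin n) ℝ) ∧
      ∃ h : (hess v x).IsHermitian,
        InGamma n 2 h.eigenvalues ∧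
        sigma n 2 h.eigenvalues = (n : ℝ) / (2 * ((n : ℝ) - 1)) := by
  intro x hx
  have hn2 : (2:ℝ) ≤ (n:ℝ) := by exact_mod_cast hn
  have hn1 : (0:ℝ) < (n:ℝ) - 1 := by linarith
  -- Part 1: the Hessian identity
  have heq : hess v x = hess u x - ((1 : ℝ) / ((n : ℝ) - 1)) • (1 : Matrix (Fin n) (Fin n) ℝ) := by
    set c : ℝ := ((n:ℝ) - 1)⁻¹ with hc
    set q : EuclideanSpace ℝ (Fin n) → ℝ := fun y => ‖y‖ ^ 2 / (2 * ((n : ℝ) - 1)) with hqdef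
    have hq : ∀ y, HasFDerivAt q ((2 * ((n:ℝ)-1))⁻¹ • (2 • innerSL ℝ y)) y := by
      intro y
      have h0 : HasFDerivAt (fun z : EuclideanSpace ℝ (Fin n) => ‖z‖ ^ 2) (2 • innerSL ℝ y) y :=
        (hasStrictFDerivAt_norm_sq y).hasFDerivAt
      have := h0.const_smul ((2 * ((n:ℝ)-1))⁻¹)
      have hfun : q = (2 * ((n:ℝ)-1))⁻¹ • fun z : EuclideanSpace ℝ (Fin n) => ‖z‖ ^ 2 := by
        ext z; simp [hqdef, div_eq_inv_mul, smul_eq_mul]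
      rw [hfun]; exact this
    have hud : ∀ y ∈ Ω, DifferentiableAt ℝ u y := fun y hy =>
      ((hu.differentiableOn (by simp)).differentiableAt (hΩ.mem_nhds hy))
    ext i j
    set M : EuclideanSpace ℝ (Fin n) →L[ℝ] ℝ := c • EuclideanSpace.proj j with hM
    have hproj : ∀ y : EuclideanSpace ℝ (Fin n), (EuclideanSpace.proj j) y = y j :=
      fun _ => rfl
    have hinner : ∀ y : EuclideanSpace ℝ (Fin n),
        (inner ℝ y (EuclideanSpace.single j (1:ℝ)) : ℝ) = y j := by
      intro y
      rw [EuclideanSpace.inner_single_right]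
      simp
    have hEq : (fun y => fderiv ℝ v y (EuclideanSpace.single j 1)) =ᶠ[nhds x]
        (fun y => fderiv ℝ u y (EuclideanSpace.single j 1) - M y) := by
      filter_upwards [hΩ.mem_nhds hx] with y hy
      have hv' : v = fun z => u z - q z := funext fun z => hv z
      rw [hv', fderiv_fun_sub (hud y hy) (hq y).differentiableAt, (hq y).fderiv]
      simp only [ContinuousLinearMap.sub_apply, ContinuousLinearMap.smul_apply,
        ContinuousLinearMap.coe_smul', Pi.smul_apply, innerSL_apply_apply, hinner, hM,
        hproj, smul_eq_mul, nsmul_eq_mul]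
      have : (2 * ((n:ℝ)-1))⁻¹ * (((2:ℕ):ℝ) * y j) = c * y j := by
        push_cast; rw [hc, mul_inv]; field_simp
      rw [this]
    have hgu : DifferentiableAt ℝ (fun y => fderiv ℝ u y (EuclideanSpace.single j 1)) x := by
      have h1 : ContDiffOn ℝ (⊤ : ℕ∞) (fun y => fderiv ℝ u y) Ω :=
        hu.fderiv_of_isOpen hΩ (by simp)
      have h2 : DifferentiableOn ℝ (fun y => fderiv ℝ u y (EuclideanSpace.single j 1)) Ω :=
        (h1.differentiableOn (by simp)).clm_apply (differentiableOn_const _)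
      exact h2.differentiableAt (hΩ.mem_nhds hx)
    have key : hess v x i j = hess u x i j - M (EuclideanSpace.single i 1) := by
      show fderiv ℝ (fun y => fderiv ℝ v y (EuclideanSpace.single j 1)) x
          (EuclideanSpace.single i 1)
        = fderiv ℝ (fun y => fderiv ℝ u y (EuclideanSpace.single j 1)) x
            (EuclideanSpace.single i 1) - M (EuclideanSpace.single i 1)
      rw [hEq.fderiv_eq, fderiv_fun_sub hgu M.differentiableAt, M.fderiv]
      simp
    rw [key]
    simp only [Matrix.sub_apply, Matrix.smul_apply, Matrix.one_apply, hM,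
      ContinuousLinearMap.smul_apply, hproj, smul_eq_mul]
    rw [EuclideanSpace.single_apply]
    have : (1:ℝ) / ((n:ℝ)-1) = c := by rw [hc, one_div]
    rw [this]
    by_cases h : i = j <;> simp [h, eq_comm]
  have hB : (hess v x).IsHermitian := by
    rw [heq]
    refine (hsym x hx).sub ?_
    unfold Matrix.IsHermitian
    rw [Matrix.conjTranspose_smul, Matrix.isHermitian_one.eq]
    simp
  set c : ℝ := (1:ℝ)/((n:ℝ)-1) with hc
  obtain ⟨hG, hrat⟩ := hadm x hx
  set S := ∑ i, (hsym x hx).eigenvalues i with hSdef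
  set Q := ∑ i, (hsym x hx).eigenvalues i ^ 2 with hQdef
  have hS_pos : 0 < S := by
    have := hG 1 le_rfl (by norm_num)
    rwa [sigma_one_eq] at this
  have hs2 : sigma n 2 ((hsym x hx).eigenvalues) = S := by
    rw [div_eq_one_iff_eq (by rw [sigma_one_eq]; exact ne_of_gt hS_pos)] at hrat
    rw [hrat, sigma_one_eq]
  have hQ_eq : Q = S^2 - 2*S := by
    have h2 := sigma_two_eq n ((hsym x hx).eigenvalues)
    rw [hs2] at h2
    rw [hQdef, hSdef]
    linarith
  have hQ_nonneg : 0 ≤ Q := Finset.sum_nonneg fun i _ => sq_nonneg _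
  have hS_gt : 2 < S := by
    rcases eq_or_lt_of_le hQ_nonneg with hq0 | hqpos
    · exfalso
      have hall := (Finset.sum_eq_zero_iff_of_nonneg
        (fun i _ => sq_nonneg ((hsym x hx).eigenvalues i))).mp hq0.symm
      have hz : S = 0 := Finset.sum_eq_zero fun i _ => by
        have := hall i (Finset.mem_univ i)
        exact pow_eq_zero_iff two_ne_zero |>.mp this
      linarith
    · nlinarith [hQ_eq, hqpos, hS_pos]
  have htrA : (hess u x).trace = S := herm_trace (hsym x hx)
  have htrA2 : ((hess u x) * (hess u x)).trace = Q := herm_trace_sq (hsym x hx)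
  have hTB : (hess v x).trace = S - (n:ℝ)*c := by
    rw [heq, Matrix.trace_sub, Matrix.trace_smul, htrA, Matrix.trace_one]
    simp [smul_eq_mul]
    ring
  have hBB : (hess v x) * (hess v x)
      = (hess u x)*(hess u x) - c • (hess u x) - c • (hess u x) + (c*c) • 1 := by
    rw [heq]
    simp only [Matrix.sub_mul, Matrix.mul_sub, Matrix.smul_mul, Matrix.mul_smul,
      Matrix.one_mul, Matrix.mul_one, smul_smul, smul_sub, smul_add]
    abel
  have hQB : ((hess v x) * (hess v x)).trace = Q - 2*c*S + (n:ℝ)*(c*c) := by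
    rw [hBB]
    simp only [Matrix.trace_add, Matrix.trace_sub, Matrix.trace_smul, htrA, htrA2,
      Matrix.trace_one, smul_eq_mul]
    simp
    ring
  have hTB' : ∑ i, hB.eigenvalues i = S - (n:ℝ)*c := by rw [← herm_trace hB, hTB]
  have hQB' : ∑ i, hB.eigenvalues i ^ 2 = Q - 2*c*S + (n:ℝ)*(c*c) := by
    rw [← herm_trace_sq hB, hQB]
  have hsig1B : sigma n 1 hB.eigenvalues = S - (n:ℝ)*c := by rw [sigma_one_eq, hTB']
  have hsig2B : sigma n 2 hB.eigenvalues = (n:ℝ)/(2*((n:ℝ)-1)) := by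
    rw [sigma_two_eq, hTB', hQB', hQ_eq, hc]
    field_simp
    ring
  refine ⟨heq, hB, ?_, hsig2B⟩
  intro l hl1 hl2
  interval_cases l
  · rw [hsig1B, hc]
    have h1 : (n:ℝ) * ((1:ℝ)/((n:ℝ)-1)) ≤ 2 := by
      rw [mul_one_div, div_le_iff₀ hn1]
      linarith
    linarith
  · rw [hsig2B]
    positivity
end
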